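/- Let F ≥ 2 and let A ∈ M_F(ℝ) be the matrix with A_{k+1,k} = √(k(F−k)) for 1 ≤ k ≤ F−1 and all other entries 0, and let B ∈ M_F(ℝ) be the matrix whose only nonzero entry is B_{1,F} = 1/(F−1)!. Then: (i) A^F = 0; (ii) Σ_{j=0}^{F−1} Aʲ·B·A^{F−1−j} = I_F (equivalently, the F-fold symmetric bracket with F−1 copies of A and one copy of B equals (F−1)!·I_F); (iii) for all i,j,k ≥ 0 with i+j+k = F−2, Aⁱ·B·Aʲ·B·Aᵏ = 0; and (iv) (Aᵀ)^{F−1} = (F−1)!·E_{1F}, so that B = (1/(F−1)!²)·(Aᵀ)^{F−1}, where E_{1F} is the elementary matrix with a single 1 in position (1,F). -/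

import Mathlib

/-!
`A` is a weighted shift `e_j ↦ w_{j+1} e_{j+1}` and `B` a multiple of the corner unit
`E_{0,F-1}`. Hence `A^j B A^{F-1-j}` is the diagonal unit `E_{jj}` scaled by
`(∏_{k ≤ j} w_k)(∏_{k > j} w_k) / (F-1)!`, and the weights `w_k = √(k(F-k))` multiply to
`√((F-1)!²) = (F-1)!`. A sandwich `B A^j B` is a multiple of `(A^j)_{F-1,0}`, which
vanishes unless `j = F-1`; and `A^{F-1}` is the other corner unit `E_{F-1,0}` scaled by `(F-1)!`.
-/

open Matrix Finset
open scoped Nat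

namespace Matrix

variable {R : Type*} [CommSemiring R]

/-- The subdiagonal entry in (0-based) row `i` is `w i`. -/
def weightedShift (n : ℕ) (w : ℕ → R) : Matrix (Fin n) (Fin n) R :=
  of fun i j => if (i : ℕ) = j + 1 then w i else 0

theorem weightedShift_pow_apply (n : ℕ) (w : ℕ → R) (m : ℕ) (i j : Fin n) :
    (weightedShift n w ^ m) i j =
      if (i : ℕ) = j + m then ∏ k ∈ Ioc (j : ℕ) i, w k else 0 := by
  induction m generalizing i with
  | zero => by_cases h : i = j <;> simp [h, Fin.val_eq_val]
  | succ m ih =>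
    rw [pow_succ', mul_apply]
    obtain ⟨_ | i, hi⟩ := i
    · simp [weightedShift]
    · rw [Fintype.sum_eq_single ⟨i, by omega⟩ fun l hl => by
        simp [weightedShift, Fin.ext_iff] at hl ⊢; omega]
      rw [ih]
      by_cases h : i = j + m
      · simp [weightedShift, h, ← add_assoc, prod_Ioc_succ_top, mul_comm]
      · rw [if_neg h, if_neg (by simp; omega), mul_zero]

theorem weightedShift_pow_self (n : ℕ) (w : ℕ → R) : weightedShift n w ^ n = 0 := by
  ext i j
  rw [weightedShift_pow_apply, if_neg (by omega), zero_apply]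

theorem weightedShift_pow_apply_last_zero (n : ℕ) (w : ℕ → R) (m : ℕ) :
    (weightedShift (n + 1) w ^ m) (Fin.last n) 0 =
      if m = n then ∏ k ∈ Ioc 0 n, w k else 0 := by
  simp [weightedShift_pow_apply, eq_comm]

theorem weightedShift_pow_eq_single (n : ℕ) (w : ℕ → R) :
    weightedShift (n + 1) w ^ n = single (Fin.last n) 0 (∏ k ∈ Ioc 0 n, w k) := by
  ext i j
  rw [weightedShift_pow_apply, single_apply]
  by_cases h : (i : ℕ) = j + n
  · have hi : i = Fin.last n := Fin.ext (by rw [Fin.val_last]; omega)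
    have hj : j = 0 := Fin.ext (by rw [Fin.val_zero]; omega)
    simp [hi, hj]
  · rw [if_neg h, if_neg]
    rintro ⟨rfl, rfl⟩
    simp at h

theorem mul_single_mul_apply {l m n o α : Type*} [NonUnitalNonAssocSemiring α] [Fintype m]
    [Fintype n] [DecidableEq m] [DecidableEq n] (M : Matrix l m α) (a : m) (b : n) (c : α)
    (N : Matrix n o α) (i : l) (j : o) :
    (M * single a b c * N) i j = M i a * c * N b j := by
  simp [mul_apply, single_apply, ite_and]

theorem single_mul_weightedShift_pow_mul_single_of_ne (n : ℕ) (w : ℕ → R) {m : ℕ}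
    (hm : m ≠ n) (c d : R) :
    single (0 : Fin (n + 1)) (Fin.last n) c * weightedShift (n + 1) w ^ m *
      single 0 (Fin.last n) d = 0 := by
  rw [single_mul_mul_single, weightedShift_pow_apply_last_zero, if_neg hm, mul_zero, zero_mul,
    single_zero]

theorem sum_weightedShift_pow_mul_single_mul_pow (n : ℕ) (w : ℕ → R) (c : R) :
    ∑ j ∈ range (n + 1), weightedShift (n + 1) w ^ j * single 0 (Fin.last n) c *
      weightedShift (n + 1) w ^ (n - j) = (c * ∏ k ∈ Ioc 0 n, w k) • 1 := by
  ext i l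
  have hi : (i : ℕ) ≤ n := Fin.is_le i
  rw [sum_apply, sum_eq_single_of_mem (i : ℕ) (mem_range.2 i.2) fun j _ hj => by
    rw [mul_single_mul_apply, weightedShift_pow_apply, if_neg (by simp; omega)]; simp]
  simp only [mul_single_mul_apply, weightedShift_pow_apply, Fin.val_zero, Fin.val_last, zero_add,
    if_true, smul_apply, one_apply, smul_eq_mul]
  by_cases h : i = l
  · subst h
    rw [if_pos (by omega), if_pos rfl, mul_one, mul_comm _ c, mul_assoc,
      prod_Ioc_consecutive _ (Nat.zero_le _) hi]
  · have : (i : ℕ) ≠ l := Fin.val_ne_of_ne h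
    rw [if_neg (by omega), if_neg h]; simp

end Matrix

theorem prod_Ioc_sqrt_mul_sub (n : ℕ) :
    ∏ k ∈ Ioc 0 n, √((k : ℝ) * (n + 1 - k)) = n ! := by
  have hid : ∏ k ∈ Ioc 0 n, (k : ℝ) = n ! := by
    rw [← Ico_add_one_add_one_eq_Ioc, zero_add, ← prod_Ico_id_eq_factorial, Nat.cast_prod]
  have hrev : ∏ k ∈ Ioc 0 n, ((n : ℝ) + 1 - k) = ∏ k ∈ Ioc 0 n, (k : ℝ) :=
    prod_nbij' (fun k => n + 1 - k) (fun k => n + 1 - k) (by simp; omega) (by simp; omega)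
      (by simp; omega) (by simp; omega) fun k hk => by
        simp only [mem_Ioc] at hk
        rw [Nat.cast_sub (by omega)]
        push_cast; ring
  rw [← Real.sqrt_prod _ fun k hk => ?_, prod_mul_distrib, hrev, hid,
    Real.sqrt_mul_self (by positivity)]
  have : (k : ℝ) ≤ n := by exact_mod_cast (mem_Ioc.1 hk).2
  exact mul_nonneg k.cast_nonneg (by linarith)

/-- The matrices `A = A⁺_{−1/F}` and `B = A⁺_{1−1/F}` of the little-algebra
representation generate the Clifford algebra of the polynomial `x^{F−1}y`:
`A^F = 0`, `{A,…,A,B} = (F−1)!·1` (i.e. `Σ_j Aʲ B A^{F−1−j} = 1`), all brackets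
with two `B`'s vanish, and `B = (1/(F−1)!²)·(Aᵀ)^{F−1}`. -/
theorem little_algebra_clifford_polynomial
    (F : ℕ) (hF : 2 ≤ F)
    (A B : Matrix (Fin F) (Fin F) ℝ)
    (hA : ∀ i j : Fin F, A i j =
      if (i : ℕ) = (j : ℕ) + 1 then Real.sqrt ((i.val : ℝ) * ((F : ℝ) - (i.val : ℝ)))
      else 0)
    (hB : ∀ i j : Fin F, B i j =
      if (i : ℕ) = 0 ∧ (j : ℕ) = F - 1 then 1 / (Nat.factorial (F - 1) : ℝ) else 0) :
    A ^ F = 0 ∧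
    (∑ j ∈ Finset.range F, A ^ j * B * A ^ (F - 1 - j)) = 1 ∧
    (∀ i j k : ℕ, i + j + k = F - 2 → A ^ i * B * A ^ j * B * A ^ k = 0) ∧
    Aᵀ ^ (F - 1) = (Nat.factorial (F - 1) : ℝ) •
      Matrix.single (⟨0, by omega⟩ : Fin F) (⟨F - 1, by omega⟩ : Fin F) 1 ∧
    B = (1 / (Nat.factorial (F - 1) : ℝ) ^ 2) • Aᵀ ^ (F - 1) := by
  obtain ⟨n, rfl⟩ : ∃ n, F = n + 1 := ⟨F - 1, by omega⟩
  set w : ℕ → ℝ := fun k => √(k * ((n + 1 : ℕ) - k))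
  have hw : ∏ k ∈ Ioc 0 n, w k = n ! := by
    simpa [w] using prod_Ioc_sqrt_mul_sub n
  obtain rfl : A = weightedShift (n + 1) w := by
    ext i j
    rw [hA]
    rfl
  obtain rfl : B = single 0 (Fin.last n) (1 / n ! : ℝ) := by
    ext i j
    rw [hB, single_apply]
    simp only [Fin.ext_iff, Fin.val_zero, Fin.val_last, Nat.add_sub_cancel]
    simp only [eq_comm]
  simp only [Nat.add_sub_cancel]
  refine ⟨weightedShift_pow_self _ _, ?_, fun i j k hijk => ?_, ?_, ?_⟩
  · rw [sum_weightedShift_pow_mul_single_mul_pow, hw, one_div_mul_cancel (by positivity), one_smul]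
  · rw [mul_assoc (_ ^ i), mul_assoc (_ ^ i),
      single_mul_weightedShift_pow_mul_single_of_ne _ _ (by omega), mul_zero, zero_mul]
  · rw [← transpose_pow, weightedShift_pow_eq_single, transpose_single, hw, smul_single,
      smul_eq_mul, mul_one]
    rfl
  · rw [← transpose_pow, weightedShift_pow_eq_single, transpose_single, hw, smul_single,
      smul_eq_mul]
    field_simp
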